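/- Let F : X → Y be a map, M ⊆ X, x† ∈ M ∩ M_{q,w}, and let F'(x†) : X → Y be a bounded linear operator such that ‖F'(x†)(x − x†)‖_Y ≤ σ(‖F(x) − F(x†)‖_Y) for all x ∈ M, where σ is a concave index function (concave, non-decreasing, lim_{t→0+} σ(t) = 0). Suppose for every k ∈ supp(x†) there exists f_k ∈ Y* with u_k = F'(x†)*f_k. Then for all x ∈ M ∩ M_{q,w} the variational inequality R_{q,w}(x − x†) ≤ R_{q,w}(x) − R_{q,w}(x†) + φ_{q,w,σ}(‖F(x) − F(x†)‖_Y) holds, where φ_{q,w,σ}(t) := 2 inf_{n∈ℕ} ( Σ_{k=n+1}^∞ w_k |⟨x†, u_k⟩_X|^q + σ(t)^q Σ_{k∈S_n(x†)} w_k ‖f_k‖_{Y*}^q ) and S_n(x†) = supp(x†) ∩ {1,…,n}. -/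
import Mathlib


open scoped RealInnerProductSpace

/-- The penalty `R_{q,w}(x) = Σ_k w_k |⟨x, u_k⟩|^q`. -/
noncomputable def Rqw {X : Type*} [NormedAddCommGroup X] [InnerProductSpace ℝ X]
    (u : ℕ → X) (w : ℕ → ℝ) (q : ℝ) (x : X) : ℝ :=
  ∑' k : ℕ, w k * |⟪x, u k⟫| ^ q

/-- Membership `x ∈ M_{q,w}`, i.e. `R_{q,w}(x) < ∞`. -/
def MemMqw {X : Type*} [NormedAddCommGroup X] [InnerProductSpace ℝ X]
    (u : ℕ → X) (w : ℕ → ℝ) (q : ℝ) (x : X) : Prop :=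
  Summable fun k : ℕ => w k * |⟪x, u k⟫| ^ q

/-- The index function
`φ_{q,w}(t) = 2 inf_n ( Σ_{k ≥ n} w_k |⟨x†,u_k⟩|^q + t^q Σ_{k ∈ S_n(x†)} w_k ‖f_k‖^q )`,
where `S_n(x†)` consists of the indices `k < n` lying in the support of `x†`. -/
noncomputable def phiIdx {X Y : Type*} [NormedAddCommGroup X] [InnerProductSpace ℝ X]
    [NormedAddCommGroup Y] [NormedSpace ℝ Y]
    (u : ℕ → X) (w : ℕ → ℝ) (q : ℝ) (xdag : X) (f : ℕ → Y →L[ℝ] ℝ) (t : ℝ) : ℝ :=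
  2 * ⨅ n : ℕ, ((∑' k : ℕ, if n ≤ k then w k * |⟪xdag, u k⟫| ^ q else 0)
      + t ^ q * ∑ k ∈ Finset.filter (fun k => ⟪xdag, u k⟫ ≠ 0) (Finset.range n),
          w k * ‖f k‖ ^ q)

open Filter Topology

/-- Subadditivity of `t ↦ t^q` for `0 ≤ q ≤ 1` on nonnegative reals. -/
lemma rpow_add_le_add_rpow_real {a b q : ℝ} (ha : 0 ≤ a) (hb : 0 ≤ b)
    (hq0 : 0 ≤ q) (hq1 : q ≤ 1) : (a + b) ^ q ≤ a ^ q + b ^ q := by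
  have := NNReal.rpow_add_le_add_rpow (Real.toNNReal a) (Real.toNNReal b) hq0 hq1
  have h2 : ((Real.toNNReal a + Real.toNNReal b : NNReal) ^ q : ℝ) ≤
      ((Real.toNNReal a : NNReal) ^ q : ℝ) + ((Real.toNNReal b : NNReal) ^ q : ℝ) := by
    exact_mod_cast this
  simpa [NNReal.coe_rpow, Real.coe_toNNReal, ha, hb] using h2

/-- `|a - b|^q ≤ |a|^q + |b|^q` for `0 ≤ q ≤ 1`. -/
lemma abs_sub_rpow_le {a b q : ℝ} (hq0 : 0 ≤ q) (hq1 : q ≤ 1) :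
    |a - b| ^ q ≤ |a| ^ q + |b| ^ q := by
  calc |a - b| ^ q ≤ (|a| + |b|) ^ q :=
        Real.rpow_le_rpow (abs_nonneg _) (abs_sub _ _) hq0
    _ ≤ |a| ^ q + |b| ^ q :=
        rpow_add_le_add_rpow_real (abs_nonneg _) (abs_nonneg _) hq0 hq1

/-- **Remark 4.8: nonlinear forward operators.** Let `F : X → Y` be a map,
`M ⊆ X`, `x† ∈ M ∩ M_{q,w}`, and let `B = F'(x†)` be a bounded linear operator with
`‖F'(x†)(x − x†)‖ ≤ σ(‖F(x) − F(x†)‖)` for all `x ∈ M`, where `σ` is a concave index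
function. If `u_k = F'(x†)* f_k` for all `k ∈ supp x†`, then for all `x ∈ M ∩ M_{q,w}`
the variational inequality
`R_{q,w}(x − x†) ≤ R_{q,w}(x) − R_{q,w}(x†) + φ_{q,w,σ}(‖F(x) − F(x†)‖)` holds, where
`φ_{q,w,σ}(t) = 2 inf_n ( Σ_{k ≥ n} w_k |⟨x†,u_k⟩|^q + σ(t)^q Σ_{k ∈ S_n(x†)} w_k ‖f_k‖^q )`,
i.e. `φ_{q,w,σ}(t) = φ_{q,w}(σ(t))` with `φ_{q,w} = phiIdx`. -/
theorem variational_inequality_nonlinear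
    {X Y : Type*} [NormedAddCommGroup X] [InnerProductSpace ℝ X] [CompleteSpace X]
    [NormedAddCommGroup Y] [NormedSpace ℝ Y]
    (u : ℕ → X) (hu : Orthonormal ℝ u)
    (hspan : (Submodule.span ℝ (Set.range u)).topologicalClosure = ⊤)
    (q : ℝ) (hq0 : 0 < q) (hq1 : q ≤ 1)
    (w : ℕ → ℝ) (w0 : ℝ) (hw0 : 0 < w0) (hw : ∀ k, w0 ≤ w k)
    (F : X → Y) (M : Set X) (B : X →L[ℝ] Y)
    (σ : ℝ → ℝ)
    (hσconc : ConcaveOn ℝ (Set.Ici 0) σ)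
    (hσmono : ∀ s t : ℝ, 0 ≤ s → s ≤ t → σ s ≤ σ t)
    (hσlim : Tendsto σ (nhdsWithin 0 (Set.Ioi 0)) (nhds 0))
    (xdag : X) (hxM : xdag ∈ M) (hxdag : MemMqw u w q xdag)
    (hstruct : ∀ x ∈ M, ‖B (x - xdag)‖ ≤ σ (‖F x - F xdag‖))
    (f : ℕ → Y →L[ℝ] ℝ)
    (hf : ∀ k, ⟪xdag, u k⟫ ≠ 0 → ∀ x : X, ⟪u k, x⟫ = f k (B x)) :
    ∀ x ∈ M, MemMqw u w q x →
      MemMqw u w q (x - xdag) ∧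
      Rqw u w q (x - xdag) ≤
        Rqw u w q x - Rqw u w q xdag + phiIdx u w q xdag f (σ (‖F x - F xdag‖)) := by
  intro x hxMmem hx
  set a : ℕ → ℝ := fun k => ⟪x, u k⟫ with ha
  set b : ℕ → ℝ := fun k => ⟪xdag, u k⟫ with hb
  have hc : ∀ k, ⟪x - xdag, u k⟫ = a k - b k := fun k => inner_sub_left x xdag (u k)
  set s : ℝ := σ (‖F x - F xdag‖) with hs
  have hs0 : 0 ≤ s := le_trans (norm_nonneg (B (x - xdag))) (hstruct x hxMmem)
  have hwnn : ∀ k, 0 ≤ w k := fun k => le_trans hw0.le (hw k)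
  -- summability of x - xdag
  have hterm_le : ∀ k, w k * |⟪x - xdag, u k⟫| ^ q ≤
      w k * |a k| ^ q + w k * |b k| ^ q := by
    intro k
    rw [hc k]
    have := abs_sub_rpow_le (a := a k) (b := b k) hq0.le hq1
    nlinarith [hwnn k, Real.rpow_nonneg (abs_nonneg (a k - b k)) q]
  have htermnn : ∀ (y : X) (k : ℕ), 0 ≤ w k * |⟪y, u k⟫| ^ q := fun y k =>
    mul_nonneg (hwnn k) (Real.rpow_nonneg (abs_nonneg _) q)
  have hsumC : MemMqw u w q (x - xdag) := by
    refine Summable.of_nonneg_of_le (fun k => htermnn _ k) hterm_le (hx.add hxdag)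
  refine ⟨hsumC, ?_⟩
  -- summability of the tail
  have htail : ∀ n : ℕ, Summable fun k : ℕ =>
      (if n ≤ k then w k * |b k| ^ q else 0) := by
    intro n
    refine Summable.of_nonneg_of_le (fun k => ?_) (fun k => ?_) hxdag
    · split <;> first | exact htermnn xdag k | exact le_refl 0
    · split
      · exact le_refl _
      · exact htermnn xdag k
  -- the key estimate for each n
  have key : ∀ n : ℕ,
      Rqw u w q (x - xdag) + Rqw u w q xdag ≤
      Rqw u w q x + 2 * ((∑' k : ℕ, if n ≤ k then w k * |b k| ^ q else 0)
        + s ^ q * ∑ k ∈ Finset.filter (fun k => b k ≠ 0) (Finset.range n),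
            w k * ‖f k‖ ^ q) := by
    intro n
    set T := Finset.filter (fun k => b k ≠ 0) (Finset.range n) with hT
    set h : ℕ → ℝ := fun k => w k * |a k| ^ q
      + 2 * (if n ≤ k then w k * |b k| ^ q else 0)
      + (if k ∈ T then 2 * (s ^ q * (w k * ‖f k‖ ^ q)) else 0) with hh
    have hsumh : Summable h := by
      refine (hx.add ((htail n).mul_left 2)).add ?_
      exact summable_of_ne_finset_zero (s := T) (fun k hk => by simp [hh, hk])
    have hpt : ∀ k, w k * |⟪x - xdag, u k⟫| ^ q + w k * |b k| ^ q ≤ h k := by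
      intro k
      have hfknn : 0 ≤ s ^ q * (w k * ‖f k‖ ^ q) :=
        mul_nonneg (Real.rpow_nonneg hs0 q)
          (mul_nonneg (hwnn k) (Real.rpow_nonneg (norm_nonneg _) q))
      rw [hc k]
      by_cases hnk : n ≤ k
      · have h1 := abs_sub_rpow_le (a := a k) (b := b k) hq0.le hq1
        have h2 : w k * |a k - b k| ^ q ≤ w k * (|a k| ^ q + |b k| ^ q) :=
          mul_le_mul_of_nonneg_left h1 (hwnn k)
        simp only [hh, if_pos hnk]
        split <;> nlinarith
      · by_cases hbk : b k = 0
        · have hkT : k ∉ T := by simp [hT, hbk]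
          simp only [hh, if_neg (by omega : ¬ n ≤ k), if_neg hkT, hbk, sub_zero,
            abs_zero, Real.zero_rpow hq0.ne', mul_zero, add_zero, mul_zero, add_zero]
          linarith
        · have hkT : k ∈ T := by simp [hT, hbk]; omega
          -- |a k - b k| ≤ ‖f k‖ * s
          have hck : |a k - b k| ≤ ‖f k‖ * s := by
            have hip : ⟪u k, x - xdag⟫ = f k (B (x - xdag)) := hf k hbk (x - xdag)
            have : a k - b k = f k (B (x - xdag)) := by
              rw [← hip, real_inner_comm]; exact hc k ▸ rfl
            rw [this]
            calc |f k (B (x - xdag))| = ‖f k (B (x - xdag))‖ := (Real.norm_eq_abs _).symm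
              _ ≤ ‖f k‖ * ‖B (x - xdag)‖ := (f k).le_opNorm _
              _ ≤ ‖f k‖ * s := mul_le_mul_of_nonneg_left (hstruct x hxMmem) (norm_nonneg _)
          have hckq : |a k - b k| ^ q ≤ ‖f k‖ ^ q * s ^ q := by
            calc |a k - b k| ^ q ≤ (‖f k‖ * s) ^ q :=
                  Real.rpow_le_rpow (abs_nonneg _) hck hq0.le
              _ = ‖f k‖ ^ q * s ^ q := Real.mul_rpow (norm_nonneg _) hs0
          -- |b k|^q ≤ |a k|^q + |a k - b k|^q
          have hbq : |b k| ^ q ≤ |a k| ^ q + |a k - b k| ^ q := by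
            have := abs_sub_rpow_le (a := a k) (b := a k - b k) hq0.le hq1
            simpa using this
          simp only [hh, if_neg (by omega : ¬ n ≤ k), if_pos hkT, mul_zero, add_zero]
          have hcc : w k * |a k - b k| ^ q ≤ w k * (‖f k‖ ^ q * s ^ q) :=
            mul_le_mul_of_nonneg_left hckq (hwnn k)
          nlinarith [hwnn k, mul_le_mul_of_nonneg_left hbq (hwnn k)]
    have hRx : Rqw u w q x = ∑' k, w k * |a k| ^ q := rfl
    have hRd : Rqw u w q xdag = ∑' k, w k * |b k| ^ q := rfl
    have hRc : Rqw u w q (x - xdag) = ∑' k, w k * |a k - b k| ^ q := by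
      unfold Rqw; exact tsum_congr fun k => by rw [hc k]
    rw [hRx, hRd, hRc]
    have hsumC' : Summable fun k => w k * |a k - b k| ^ q := by
      have := hsumC; unfold MemMqw at this
      simpa only [hc] using this
    have hL : (∑' k, w k * |a k - b k| ^ q) + (∑' k, w k * |b k| ^ q) =
        ∑' k, (w k * |a k - b k| ^ q + w k * |b k| ^ q) :=
      (Summable.tsum_add hsumC' hxdag).symm
    have hFz : ∀ k ∉ T, (if k ∈ T then 2 * (s ^ q * (w k * ‖f k‖ ^ q)) else 0) = 0 :=
      fun k hk => if_neg hk
    have hR : (∑' k, h k) = (∑' k, w k * |a k| ^ q)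
        + 2 * (∑' k : ℕ, if n ≤ k then w k * |b k| ^ q else 0)
        + 2 * (s ^ q * ∑ k ∈ T, w k * ‖f k‖ ^ q) := by
      simp only [hh]
      rw [Summable.tsum_add (hx.add ((htail n).mul_left 2))
        (summable_of_ne_finset_zero (s := T) hFz)]
      rw [Summable.tsum_add hx ((htail n).mul_left 2), tsum_mul_left]
      rw [tsum_eq_sum (s := T) hFz]
      simp only [Finset.sum_ite_mem, Finset.inter_self]
      rw [← Finset.mul_sum, ← Finset.mul_sum]

    have hpt' : ∀ k, w k * |a k - b k| ^ q + w k * |b k| ^ q ≤ h k := by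
      intro k; have := hpt k; rwa [hc k] at this
    rw [hL]
    calc (∑' k, (w k * |a k - b k| ^ q + w k * |b k| ^ q)) ≤ ∑' k, h k :=
          Summable.tsum_le_tsum hpt' (hsumC'.add hxdag) hsumh
      _ = (∑' k, w k * |a k| ^ q) + 2 * ((∑' k : ℕ, if n ≤ k then w k * |b k| ^ q else 0)
            + s ^ q * ∑ k ∈ T, w k * ‖f k‖ ^ q) := by rw [hR]; ring
  -- pass to the infimum
  have hinf : (Rqw u w q (x - xdag) + Rqw u w q xdag - Rqw u w q x) / 2 ≤
      ⨅ n : ℕ, ((∑' k : ℕ, if n ≤ k then w k * |b k| ^ q else 0)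
        + s ^ q * ∑ k ∈ Finset.filter (fun k => b k ≠ 0) (Finset.range n),
            w k * ‖f k‖ ^ q) := by
    refine le_ciInf fun n => ?_
    have := key n
    linarith
  have hphi : phiIdx u w q xdag f s =
      2 * ⨅ n : ℕ, ((∑' k : ℕ, if n ≤ k then w k * |b k| ^ q else 0)
        + s ^ q * ∑ k ∈ Finset.filter (fun k => b k ≠ 0) (Finset.range n),
            w k * ‖f k‖ ^ q) := rfl
  rw [hphi]
  linarith
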